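/- arXiv:1603.02448 — 11 statements merged into one kernel-verified Lean document; each statement's English description precedes it below -/
import Mathlib

section
/- For every ξ > 0 and all (y,z) ∈ ℝ², the reduced vector field at parameter α = ξ is Hamiltonian up to the positive factor g: f₀(y,z;ξ) = g(y,z)·J·∇H(y,z), where J = [[0,1],[−1,0]]; explicitly, e^z − 1 = g(y,z)·∂H/∂z(y,z) and ξ + e^z(ξz − ξy − ξ) = −g(y,z)·∂H/∂y(y,z). -/
/-- The reduced vector field of the spring-block earthquake model:
`f₀(y,z;α) = (e^z − 1, ξ + e^z(αz − ξy − ξ))`. -/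
noncomputable def f0 (ξ α y z : ℝ) : ℝ × ℝ :=
  (Real.exp z - 1, ξ + Real.exp z * (α * z - ξ * y - ξ))

/-- The Hamiltonian `H(y,z) = −e^{−ξy}(ξy − ξz + ξ + 1 − ξe^{−z}) + 1`. -/
noncomputable def Ham (ξ y z : ℝ) : ℝ :=
  -Real.exp (-ξ * y) * (ξ * y - ξ * z + ξ + 1 - ξ * Real.exp (-z)) + 1

/-- The positive factor `g(y,z) = e^{ξy+z}/ξ`. -/
noncomputable def gfac (ξ y z : ℝ) : ℝ := Real.exp (ξ * y + z) / ξ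

lemma deriv_Ham_z (ξ y z : ℝ) :
    deriv (fun z' => Ham ξ y z') z
      = -Real.exp (-ξ * y) * (-ξ + ξ * Real.exp (-z)) := by
  have h1 : HasDerivAt (fun z' : ℝ => Real.exp (-z')) (-Real.exp (-z)) z := by
    simpa [Function.comp_def] using (Real.hasDerivAt_exp (-z)).comp z ((hasDerivAt_id z).neg)
  have h2 : HasDerivAt (fun z' : ℝ => ξ * y - ξ * z' + ξ + 1 - ξ * Real.exp (-z'))
      (-ξ + ξ * Real.exp (-z)) z := by
    have := (((hasDerivAt_const z (ξ*y)).sub ((hasDerivAt_id z).const_mul ξ)).add_const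
      ξ).add_const 1 |>.sub (h1.const_mul ξ)
    exact this.congr_deriv (by ring)
  have h3 : HasDerivAt (fun z' => Ham ξ y z')
      (-Real.exp (-ξ * y) * (-ξ + ξ * Real.exp (-z))) z := by
    unfold Ham
    exact (h2.const_mul (-Real.exp (-ξ * y))).add_const 1
  exact h3.deriv

lemma deriv_Ham_y (ξ y z : ℝ) :
    deriv (fun y' => Ham ξ y' z) y
      = ξ * Real.exp (-ξ * y) * (ξ * y - ξ * z + ξ + 1 - ξ * Real.exp (-z))
        + -Real.exp (-ξ * y) * ξ := by
  have h1 : HasDerivAt (fun y' : ℝ => -Real.exp (-ξ * y')) (ξ * Real.exp (-ξ * y)) y := by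
    have : HasDerivAt (fun y' : ℝ => Real.exp (-ξ * y')) (-ξ * Real.exp (-ξ * y)) y := by
      have := (Real.hasDerivAt_exp (-ξ * y)).comp y ((hasDerivAt_id y).const_mul (-ξ))
      simpa [Function.comp_def, neg_mul, mul_comm] using this
    exact this.neg.congr_deriv (by ring)
  have h2 : HasDerivAt (fun y' : ℝ => ξ * y' - ξ * z + ξ + 1 - ξ * Real.exp (-z)) ξ y := by
    have := ((((hasDerivAt_id y).const_mul ξ).sub_const (ξ*z)).add_const ξ).add_const 1
      |>.sub_const (ξ * Real.exp (-z))
    simpa using this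
  have h3 : HasDerivAt (fun y' => Ham ξ y' z)
      (ξ * Real.exp (-ξ * y) * (ξ * y - ξ * z + ξ + 1 - ξ * Real.exp (-z))
        + -Real.exp (-ξ * y) * ξ) y := by
    unfold Ham
    exact (h1.mul h2).add_const 1
  exact h3.deriv

/-- At `α = ξ` the reduced vector field is Hamiltonian up to the positive factor `g`:
`f₀(y,z;ξ) = g(y,z) · J · ∇H(y,z)` with `J = [[0,1],[−1,0]]`; componentwise,
`e^z − 1 = g·∂H/∂z` and `ξ + e^z(ξz − ξy − ξ) = −g·∂H/∂y`. -/
theorem stmt1 (ξ : ℝ) (hξ : 0 < ξ) (y z : ℝ) :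
    Real.exp z - 1 = gfac ξ y z * deriv (fun z' => Ham ξ y z') z ∧
    ξ + Real.exp z * (ξ * z - ξ * y - ξ)
      = -(gfac ξ y z * deriv (fun y' => Ham ξ y' z) y) := by
  have hne : ξ ≠ 0 := ne_of_gt hξ
  have e1 : Real.exp (ξ * y + z) * Real.exp (-ξ * y) = Real.exp z := by
    rw [← Real.exp_add]; ring_nf
  have e2 : Real.exp z * Real.exp (-z) = 1 := by
    rw [← Real.exp_add]; simp
  simp only [neg_mul] at e1
  constructor
  · rw [deriv_Ham_z, gfac]
    field_simp
    linear_combination (Real.exp (-z) - 1) * e1 + e2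
  · rw [deriv_Ham_y, gfac]
    field_simp
    linear_combination (-ξ)*(z - y + Real.exp (-z) - 1)*e1 - ξ*e2
end

section
/- Let ξ > 0. If γ : I → ℝ² is a differentiable curve on an interval I satisfying γ'(t) = f₀(γ(t); ξ) for all t ∈ I, then H(γ(t)) is constant on I; that is, H is a first integral of the reduced problem at α = ξ. -/
/-- `H` is a first integral of the reduced problem at `α = ξ`: it is constant
along every solution curve defined on an interval. -/
theorem stmt3 (ξ : ℝ) (hξ : 0 < ξ) (I : Set ℝ) (hI : I.OrdConnected)
    (γ : ℝ → ℝ × ℝ)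
    (hγ : ∀ t ∈ I, HasDerivAt γ (f0 ξ ξ (γ t).1 (γ t).2) t) :
    ∀ s ∈ I, ∀ t ∈ I, Ham ξ (γ s).1 (γ s).2 = Ham ξ (γ t).1 (γ t).2 := by
  have hd : ∀ t ∈ I, HasDerivAt (fun t => Ham ξ (γ t).1 (γ t).2) 0 t := by
    intro t ht
    set y := (γ t).1
    set z := (γ t).2
    have hy : HasDerivAt (fun t => (γ t).1) (Real.exp z - 1) t := (hγ t ht).fst
    have hz : HasDerivAt (fun t => (γ t).2)
        (ξ + Real.exp z * (ξ * z - ξ * y - ξ)) t := (hγ t ht).snd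
    set y' := Real.exp z - 1 with hy'
    set z' := ξ + Real.exp z * (ξ * z - ξ * y - ξ) with hz'
    have h1 : HasDerivAt (fun t => Real.exp (-ξ * (γ t).1))
        (Real.exp (-ξ * y) * (-ξ * y')) t := (hy.const_mul (-ξ)).exp
    have h2 : HasDerivAt (fun t => Real.exp (-(γ t).2))
        (Real.exp (-z) * (-z')) t := hz.neg.exp
    have h3 : HasDerivAt (fun t => ξ * (γ t).1 - ξ * (γ t).2 + ξ + 1
          - ξ * Real.exp (-(γ t).2))
        (ξ * y' - ξ * z' - ξ * (Real.exp (-z) * (-z'))) t :=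
      ((((hy.const_mul ξ).sub (hz.const_mul ξ)).add_const ξ).add_const 1).sub
        (h2.const_mul ξ)
    have h4 : HasDerivAt (fun t => Ham ξ (γ t).1 (γ t).2)
        ((-(Real.exp (-ξ * y) * (-ξ * y'))) * (ξ * y - ξ * z + ξ + 1 - ξ * Real.exp (-z))
          + (-Real.exp (-ξ * y)) * (ξ * y' - ξ * z' - ξ * (Real.exp (-z) * (-z'))))
        t := by
      have := (h1.neg.mul h3).add_const 1
      simpa [Ham] using this
    convert h4 using 1
    have hez : Real.exp (-z) = (Real.exp z)⁻¹ := Real.exp_neg z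
    have h0 : Real.exp z ≠ 0 := (Real.exp_pos z).ne'
    rw [hy', hz', hez]
    field_simp
    ring
  intro s hs t ht
  rcases le_total s t with h | h
  · have hsub : Set.Icc s t ⊆ I := hI.out hs ht
    have := constant_of_has_deriv_right_zero
      (f := fun t => Ham ξ (γ t).1 (γ t).2) (a := s) (b := t)
      (fun x hx => ((hd x (hsub hx)).continuousAt.continuousWithinAt))
      (fun x hx => ((hd x (hsub (Set.mem_Icc_of_Ico hx))).hasDerivWithinAt))
      t (Set.right_mem_Icc.mpr h)
    exact this.symm
  · have hsub : Set.Icc t s ⊆ I := hI.out ht hs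
    exact constant_of_has_deriv_right_zero
      (f := fun t => Ham ξ (γ t).1 (γ t).2) (a := t) (b := s)
      (fun x hx => ((hd x (hsub hx)).continuousAt.continuousWithinAt))
      (fun x hx => ((hd x (hsub (Set.mem_Icc_of_Ico hx))).hasDerivWithinAt))
      s (Set.right_mem_Icc.mpr h)
end

section
/- For every ξ > 0, α ∈ ℝ and all (y,z) ∈ ℝ², the derivative of H along the reduced vector field satisfies the identity ⟨∇H(y,z), f₀(y,z;α)⟩ = (α − ξ)·ξ·e^{−ξy}·z·(e^z − 1). Since z(e^z − 1) ≥ 0 for all z with equality exactly when z = 0, H is nondecreasing along every solution of the reduced problem when α ≥ ξ and nonincreasing when α ≤ ξ; moreover the derivative of H along the flow vanishes at a point only when z = 0 or α = ξ. -/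
lemma ham_hasDerivAt (ξ : ℝ) {Y Z : ℝ → ℝ} {vy vz t : ℝ}
    (hY : HasDerivAt Y vy t) (hZ : HasDerivAt Z vz t) :
    HasDerivAt (fun s => Ham ξ (Y s) (Z s))
      (ξ * Real.exp (-ξ * Y t) * (ξ * Y t - ξ * Z t + ξ - ξ * Real.exp (-Z t)) * vy
        + ξ * Real.exp (-ξ * Y t) * (1 - Real.exp (-Z t)) * vz) t := by
  have hE : HasDerivAt (fun s => Real.exp (-ξ * Y s))
      (Real.exp (-ξ * Y t) * (-ξ * vy)) t := by
    have := ((hY.const_mul (-ξ)).exp)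
    simpa [mul_comm] using this
  have hEZ : HasDerivAt (fun s => Real.exp (-Z s)) (Real.exp (-Z t) * (-vz)) t := by
    simpa [mul_comm] using (hZ.neg.exp)
  have hP : HasDerivAt (fun s => ξ * Y s - ξ * Z s + ξ + 1 - ξ * Real.exp (-Z s))
      (ξ * vy - ξ * vz - ξ * (Real.exp (-Z t) * (-vz))) t :=
    ((((hY.const_mul ξ).sub (hZ.const_mul ξ)).add_const ξ).add_const 1).sub
      (hEZ.const_mul ξ)
  have h := (hE.neg.mul hP).add_const 1
  refine h.congr_deriv ?_
  simp only [Pi.neg_apply]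
  ring

lemma znn (z : ℝ) : 0 ≤ z * (Real.exp z - 1) := by
  rcases le_or_gt 0 z with h | h
  · exact mul_nonneg h (by simpa using Real.one_le_exp h)
  · calc (0:ℝ) ≤ (-z) * (1 - Real.exp z) :=
        mul_nonneg (by linarith) (by nlinarith [Real.exp_lt_one_iff.2 h])
      _ = z * (Real.exp z - 1) := by ring

/-- The derivative of `H` along the reduced vector field is
`⟨∇H, f₀⟩ = (α−ξ)ξe^{−ξy}z(e^z−1)`; since `z(e^z−1) ≥ 0` with equality exactly at
`z = 0`, `H` is nondecreasing along solutions when `α ≥ ξ`, nonincreasing when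
`α ≤ ξ`, and the derivative along the flow vanishes only when `z = 0` or `α = ξ`. -/
theorem stmt4 (ξ α : ℝ) (hξ : 0 < ξ) :
    (∀ y z : ℝ,
      deriv (fun y' => Ham ξ y' z) y * (f0 ξ α y z).1 +
        deriv (fun z' => Ham ξ y z') z * (f0 ξ α y z).2
        = (α - ξ) * ξ * Real.exp (-ξ * y) * z * (Real.exp z - 1)) ∧
    (∀ z : ℝ, 0 ≤ z * (Real.exp z - 1) ∧ (z * (Real.exp z - 1) = 0 ↔ z = 0)) ∧
    (∀ γ : ℝ → ℝ × ℝ, (∀ t, HasDerivAt γ (f0 ξ α (γ t).1 (γ t).2) t) →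
      (ξ ≤ α → Monotone fun t => Ham ξ (γ t).1 (γ t).2) ∧
      (α ≤ ξ → Antitone fun t => Ham ξ (γ t).1 (γ t).2)) ∧
    (∀ y z : ℝ,
      deriv (fun y' => Ham ξ y' z) y * (f0 ξ α y z).1 +
        deriv (fun z' => Ham ξ y z') z * (f0 ξ α y z).2 = 0 →
      z = 0 ∨ α = ξ) := by
  have hdy : ∀ y z : ℝ, deriv (fun y' => Ham ξ y' z) y
      = ξ * Real.exp (-ξ * y) * (ξ * y - ξ * z + ξ - ξ * Real.exp (-z)) := by
    intro y z
    have := (ham_hasDerivAt ξ (Y := fun y' => y') (Z := fun _ => z)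
      (hasDerivAt_id y) (hasDerivAt_const y z)).deriv
    simpa using this
  have hdz : ∀ y z : ℝ, deriv (fun z' => Ham ξ y z') z
      = ξ * Real.exp (-ξ * y) * (1 - Real.exp (-z)) := by
    intro y z
    have := (ham_hasDerivAt ξ (Y := fun _ => y) (Z := fun z' => z')
      (hasDerivAt_const z y) (hasDerivAt_id z)).deriv
    simpa using this
  have key : ∀ y z : ℝ,
      deriv (fun y' => Ham ξ y' z) y * (f0 ξ α y z).1 +
        deriv (fun z' => Ham ξ y z') z * (f0 ξ α y z).2
        = (α - ξ) * ξ * Real.exp (-ξ * y) * z * (Real.exp z - 1) := by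
    intro y z
    rw [hdy, hdz]
    have h1 : Real.exp (-z) * Real.exp z = 1 := by
      rw [← Real.exp_add]; simp
    simp only [f0]
    rw [Real.exp_neg]
    field_simp
    ring
  have hzero : ∀ z : ℝ, z * (Real.exp z - 1) = 0 ↔ z = 0 := by
    intro z
    constructor
    · intro h
      rcases mul_eq_zero.1 h with h | h
      · exact h
      · have : Real.exp z = 1 := by linarith
        exact (Real.exp_eq_one_iff z).1 this
    · intro h; simp [h]
  refine ⟨key, fun z => ⟨znn z, hzero z⟩, ?_, ?_⟩
  · intro γ hγ
    have hg : ∀ t, HasDerivAt (fun t => Ham ξ (γ t).1 (γ t).2)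
        ((α - ξ) * ξ * Real.exp (-ξ * (γ t).1) * (γ t).2 * (Real.exp (γ t).2 - 1)) t := by
      intro t
      have hY : HasDerivAt (fun t => (γ t).1) (f0 ξ α (γ t).1 (γ t).2).1 t :=
        (ContinuousLinearMap.fst ℝ ℝ ℝ).hasFDerivAt.comp_hasDerivAt t (hγ t)
      have hZ : HasDerivAt (fun t => (γ t).2) (f0 ξ α (γ t).1 (γ t).2).2 t :=
        (ContinuousLinearMap.snd ℝ ℝ ℝ).hasFDerivAt.comp_hasDerivAt t (hγ t)
      have h := ham_hasDerivAt ξ hY hZ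
      have hk := key (γ t).1 (γ t).2
      rw [hdy, hdz] at hk
      convert h using 1
      linarith [hk]
    have hdiff : Differentiable ℝ (fun t => Ham ξ (γ t).1 (γ t).2) :=
      fun t => (hg t).differentiableAt
    constructor
    · intro hle
      apply monotone_of_deriv_nonneg hdiff
      intro t
      rw [(hg t).deriv]
      have hnn : (0:ℝ) ≤ ((α - ξ) * ξ * Real.exp (-ξ * (γ t).1)) *
          ((γ t).2 * (Real.exp (γ t).2 - 1)) :=
        mul_nonneg (mul_nonneg (mul_nonneg (sub_nonneg.2 hle) hξ.le)
          (Real.exp_pos _).le) (znn _)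
      nlinarith [hnn]
    · intro hle
      apply antitone_of_deriv_nonpos hdiff
      intro t
      rw [(hg t).deriv]
      have hnn : (0:ℝ) ≤ ((ξ - α) * ξ * Real.exp (-ξ * (γ t).1)) *
          ((γ t).2 * (Real.exp (γ t).2 - 1)) :=
        mul_nonneg (mul_nonneg (mul_nonneg (sub_nonneg.2 hle) hξ.le)
          (Real.exp_pos _).le) (znn _)
      nlinarith [hnn]
  · intro y z h
    rw [key y z] at h
    have hE := (Real.exp_pos (-ξ * y)).ne'
    rcases mul_eq_zero.1 h with h' | h'
    · rcases mul_eq_zero.1 h' with h'' | h''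
      · rcases mul_eq_zero.1 h'' with h3 | h3
        · rcases mul_eq_zero.1 h3 with h4 | h4
          · right; linarith [sub_eq_zero.1 h4]
          · exact absurd h4 hξ.ne'
        · exact absurd h3 hE
      · left; exact h''
    · left
      have : Real.exp z = 1 := by linarith
      exact (Real.exp_eq_one_iff z).1 this
end

section
/- Let ξ > 0 and α ≠ ξ. Then the reduced problem has no nonconstant periodic solutions: there is no T > 0 and nonconstant differentiable curve γ : ℝ → ℝ² with γ'(t) = f₀(γ(t); α) for all t and γ(t + T) = γ(t) for all t. -/
lemma key_pos {x : ℝ} (hx : x ≠ 0) : 0 < x * (Real.exp x - 1) := by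
  rcases lt_or_gt_of_ne hx with h | h
  · have : Real.exp x < 1 := by
      rw [← Real.exp_zero]; exact Real.exp_lt_exp.mpr h
    exact mul_pos_of_neg_of_neg h (by linarith)
  · have : 1 < Real.exp x := by
      rw [← Real.exp_zero]; exact Real.exp_lt_exp.mpr h
    exact mul_pos h (by linarith)

lemma key_nonneg (x : ℝ) : 0 ≤ x * (Real.exp x - 1) := by
  rcases eq_or_ne x 0 with h | h
  · simp [h]
  · exact (key_pos h).le

/-- For `ξ > 0` and `α ≠ ξ` the reduced problem has no nonconstant periodic
solutions. -/
theorem stmt5 (ξ α : ℝ) (hξ : 0 < ξ) (hα : α ≠ ξ) :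
    ¬ ∃ (T : ℝ) (γ : ℝ → ℝ × ℝ), 0 < T ∧
        (∀ t, HasDerivAt γ (f0 ξ α (γ t).1 (γ t).2) t) ∧
        (∀ t, γ (t + T) = γ t) ∧
        ∃ s t, γ s ≠ γ t := by
  rintro ⟨T, γ, hT, hderiv, hper, s, t, hst⟩
  set y : ℝ → ℝ := fun u => (γ u).1 with hy_def
  set z : ℝ → ℝ := fun u => (γ u).2 with hz_def
  have hy : ∀ u, HasDerivAt y (Real.exp (z u) - 1) u := fun u => by
    simpa [f0] using ((hderiv u).hasFDerivAt.fst).hasDerivAt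
  have hz : ∀ u, HasDerivAt z (ξ + Real.exp (z u) * (α * z u - ξ * y u - ξ)) u := fun u => by
    simpa [f0] using ((hderiv u).hasFDerivAt.snd).hasDerivAt
  -- the Lyapunov function along the trajectory
  set L : ℝ → ℝ := fun u => (α - ξ) *
    (Real.exp (-(ξ * y u)) * (z u + Real.exp (-(z u)) - y u - 1 - 1/ξ)) with hL_def
  set D : ℝ → ℝ := fun u =>
    (α - ξ)^2 * (Real.exp (-(ξ * y u)) * (z u * (Real.exp (z u) - 1))) with hD_def
  have hd : ∀ u, HasDerivAt L (D u) u := by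
    intro u
    have h1 : HasDerivAt (fun v => Real.exp (-(ξ * y v)))
        (Real.exp (-(ξ * y u)) * (-(ξ * (Real.exp (z u) - 1)))) u :=
      (((hy u).const_mul ξ).neg).exp
    have h2 : HasDerivAt (fun v => Real.exp (-(z v)))
        (Real.exp (-(z u)) * (-(ξ + Real.exp (z u) * (α * z u - ξ * y u - ξ)))) u :=
      ((hz u).neg).exp
    have h3 : HasDerivAt (fun v => z v + Real.exp (-(z v)) - y v - 1 - 1/ξ)
        ((ξ + Real.exp (z u) * (α * z u - ξ * y u - ξ))
          + Real.exp (-(z u)) * (-(ξ + Real.exp (z u) * (α * z u - ξ * y u - ξ)))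
          - (Real.exp (z u) - 1)) u :=
      ((((hz u).add h2).sub (hy u)).sub_const 1).sub_const (1/ξ)
    have h4 := (h1.mul h3).const_mul (α - ξ)
    convert h4 using 1
    · rfl
    · rfl
    · rfl
    have e1 : Real.exp (-(z u)) = (Real.exp (z u))⁻¹ := Real.exp_neg _
    have e2 : Real.exp (z u) ≠ 0 := (Real.exp_pos _).ne'
    simp only [hD_def, e1]
    field_simp
    ring
  have hdiff : Differentiable ℝ L := fun u => (hd u).differentiableAt
  have hmono : Monotone L := by
    apply monotone_of_deriv_nonneg hdiff
    intro u
    rw [(hd u).deriv]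
    have := key_nonneg (z u)
    positivity
  have hperL : Function.Periodic L T := by
    intro u
    have h1 : y (u + T) = y u := congrArg Prod.fst (hper u)
    have h2 : z (u + T) = z u := congrArg Prod.snd (hper u)
    simp only [hL_def, h1, h2]
  have hconst : ∀ a b : ℝ, L a = L b := by
    have hle : ∀ a b : ℝ, a ≤ b → L a = L b := by
      intro a b hab
      obtain ⟨n, hn⟩ := exists_nat_ge ((b - a) / T)
      have hbn : b ≤ a + n * T := by
        rw [div_le_iff₀ hT] at hn; linarith
      have hLn : L (a + n * T) = L a := (hperL.nat_mul n) a
      exact le_antisymm (hmono hab) (by calc L b ≤ L (a + n * T) := hmono hbn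
        _ = L a := hLn)
    intro a b
    rcases le_total a b with h | h
    · exact hle a b h
    · exact (hle b a h).symm
  have hD0 : ∀ u, D u = 0 := by
    intro u
    have hLc : L = fun _ => L 0 := funext fun a => hconst a 0
    have h0 : HasDerivAt (fun _ : ℝ => L 0) (D u) u := hLc ▸ hd u
    exact h0.unique (hasDerivAt_const u (L 0))
  have hz0 : ∀ u, z u = 0 := by
    intro u
    by_contra hne
    have h1 := hD0 u
    have h2 : (0:ℝ) < (α - ξ)^2 := by
      rcases lt_or_gt_of_ne (sub_ne_zero.mpr hα) with h | h <;> nlinarith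
    have h3 : (0:ℝ) < Real.exp (-(ξ * y u)) := Real.exp_pos _
    have h4 := key_pos hne
    have : 0 < D u := mul_pos h2 (mul_pos h3 h4)
    linarith
  have hy0 : ∀ u, HasDerivAt y 0 u := by
    intro u
    have := hy u
    rw [hz0 u] at this
    simpa using this
  have hyc : ∀ a b : ℝ, y a = y b := by
    intro a b
    exact is_const_of_deriv_eq_zero (fun u => (hy0 u).differentiableAt)
      (fun u => (hy0 u).deriv) a b
  apply hst
  have e1 : (γ s).1 = (γ t).1 := hyc s t
  have e2 : (γ s).2 = (γ t).2 := (hz0 s).trans (hz0 t).symm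
  exact Prod.ext e1 e2
end

section
/- Let ξ > 0 and h > 0. The level set L_h = {(y,z) ∈ ℝ² : H(y,z) = h} is nonempty; it is compact when 0 < h < 1, and it is unbounded when h ≥ 1. In particular the level H = 1 separates the bounded level sets (0 < h < 1) from the unbounded ones (h ≥ 1). -/
open Real

section HamAux

lemma ham_aux_psi_nonneg (z : ℝ) : 0 ≤ z + Real.exp (-z) - 1 := by
  have := Real.add_one_le_exp (-z); linarith

lemma ham_aux_phi_le_one (u : ℝ) : (1 + u) * Real.exp (-u) ≤ 1 := by
  have h1 := Real.add_one_le_exp u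
  have h2 : (1 + u) * Real.exp (-u) ≤ Real.exp u * Real.exp (-u) :=
    mul_le_mul_of_nonneg_right (by linarith) (Real.exp_pos _).le
  rwa [← Real.exp_add, add_neg_cancel, Real.exp_zero] at h2

lemma ham_aux_psi_quad (z : ℝ) (hz : z ≤ 0) : z^2/4 ≤ z + Real.exp (-z) - 1 := by
  have h1 := Real.add_one_le_exp (-z/2)
  have h2 : Real.exp (-z/2) * Real.exp (-z/2) = Real.exp (-z) := by
    rw [← Real.exp_add]; ring_nf
  nlinarith [Real.exp_pos (-z/2)]

lemma ham_aux_exp_quad (u : ℝ) (hu : 0 ≤ u) : u^2/4 ≤ Real.exp u := by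
  have h1 := Real.add_one_le_exp (u/2)
  have h2 : Real.exp (u/2) * Real.exp (u/2) = Real.exp u := by
    rw [← Real.exp_add]; ring_nf
  nlinarith [Real.exp_pos (u/2)]

end HamAux

lemma ham_eq (ξ y z : ℝ) :
    Ham ξ y z = (1 - (1 + ξ*y) * Real.exp (-(ξ*y)))
      + ξ * Real.exp (-(ξ*y)) * (z + Real.exp (-z) - 1) := by
  unfold Ham
  rw [show -ξ * y = -(ξ*y) by ring]
  ring

lemma ham_cont (ξ : ℝ) : Continuous (fun p : ℝ × ℝ => Ham ξ p.1 p.2) := by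
  unfold Ham; fun_prop

lemma ham_exists_z (ξ h t : ℝ) (hξ : 0 < ξ) (h1 : 1 ≤ h) (htnn : 0 ≤ t) :
    ∃ z, Ham ξ t z = h := by
  have hh : 0 < h := by linarith
  set Z : ℝ := 1 + h * Real.exp (ξ*t) / ξ with hZ
  have hZpos : 0 < h * Real.exp (ξ*t) / ξ := by positivity
  have hZnn : (0:ℝ) ≤ Z := by rw [hZ]; linarith
  have hgc : ContinuousOn (fun z => Ham ξ t z) (Set.Icc 0 Z) :=
    ((ham_cont ξ).comp (continuous_const.prodMk continuous_id)).continuousOn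
  have hg0 : Ham ξ t 0 ≤ h := by
    rw [ham_eq]
    have hpos : 0 < (1 + ξ*t) * Real.exp (-(ξ*t)) := by positivity
    simp only [neg_zero, Real.exp_zero]
    nlinarith [Real.exp_pos (-(ξ*t))]
  have hgZ : h ≤ Ham ξ t Z := by
    rw [ham_eq]
    have hφ := ham_aux_phi_le_one (ξ*t)
    have hEE : Real.exp (-(ξ*t)) * Real.exp (ξ*t) = 1 := by
      rw [← Real.exp_add]; simp
    have hψZ : Z - 1 ≤ Z + Real.exp (-Z) - 1 := by
      have := Real.exp_pos (-Z); linarith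
    have hZ1 : Z - 1 = h * Real.exp (ξ*t) / ξ := by rw [hZ]; ring
    have h16 : ξ * Real.exp (-(ξ*t)) * (Z - 1) = h := by
      rw [hZ1]; field_simp; linear_combination hEE
    have h17 : h ≤ ξ * Real.exp (-(ξ*t)) * (Z + Real.exp (-Z) - 1) := by
      rw [← h16]
      exact mul_le_mul_of_nonneg_left hψZ (by positivity)
    nlinarith [Real.exp_pos (-(ξ*t))]
  obtain ⟨z, _, hz⟩ := intermediate_value_Icc hZnn hgc ⟨hg0, hgZ⟩
  exact ⟨z, hz⟩

/-- For `h > 0` the level set `{H = h}` is nonempty; it is compact when `0 < h < 1`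
and unbounded when `h ≥ 1`. -/
theorem stmt8 (ξ h : ℝ) (hξ : 0 < ξ) (hh : 0 < h) :
    ({p : ℝ × ℝ | Ham ξ p.1 p.2 = h}).Nonempty ∧
    (h < 1 → IsCompact {p : ℝ × ℝ | Ham ξ p.1 p.2 = h}) ∧
    (1 ≤ h → ¬ Bornology.IsBounded {p : ℝ × ℝ | Ham ξ p.1 p.2 = h}) := by
  refine ⟨?_, ?_, ?_⟩
  · -- Nonempty
    set f : ℝ → ℝ := fun y => Ham ξ y 0 with hf
    have hfc : ContinuousOn f (Set.Icc (-(1+h)/ξ) 0) :=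
      ((ham_cont ξ).comp (continuous_id.prodMk continuous_const)).continuousOn
    have hy0 : (-(1+h)/ξ) ≤ 0 := by
      apply div_nonpos_of_nonpos_of_nonneg <;> linarith
    have hivt := intermediate_value_Icc' hy0 hfc
    have hf0 : f 0 = 0 := by
      simp [hf, ham_eq]
    have hfneg : h ≤ f (-(1+h)/ξ) := by
      have hu : ξ * (-(1+h)/ξ) = -(1+h) := by field_simp
      have heq : f (-(1+h)/ξ)
          = 1 - (1 + -(1+h)) * Real.exp (-(-(1+h))) := by
        rw [hf]; simp only
        rw [ham_eq, hu]
        simp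
      rw [heq]
      have he : (1:ℝ) ≤ Real.exp (1+h) := by
        have := Real.add_one_le_exp (1+h); linarith
      have h2 : 1 + -(1+h) = -h := by ring
      rw [h2]
      simp only [neg_neg]
      nlinarith
    have hmem : h ∈ Set.Icc (f 0) (f (-(1+h)/ξ)) := ⟨by rw [hf0]; linarith, hfneg⟩
    obtain ⟨y, _, hy⟩ := hivt hmem
    exact ⟨(y, 0), hy⟩
  · -- Compact
    intro h1
    have h1s : (0:ℝ) < 1 - h := by linarith
    set B : ℝ := 1 + 9/(1-h) with hB
    set M : ℝ := Real.exp B / ξ with hM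
    have hMnn : 0 ≤ M := div_nonneg (Real.exp_pos _).le hξ.le
    have hclosed : IsClosed {p : ℝ × ℝ | Ham ξ p.1 p.2 = h} :=
      isClosed_eq (ham_cont ξ) continuous_const
    apply Metric.isCompact_of_isClosed_isBounded hclosed
    have hsub : {p : ℝ × ℝ | Ham ξ p.1 p.2 = h} ⊆
        Set.Icc (-1/ξ) (B/ξ) ×ˢ Set.Icc (-(4*M+4)) (M+1) := by
      rintro ⟨y, z⟩ hp
      simp only [Set.mem_setOf_eq] at hp
      rw [ham_eq] at hp
      set u : ℝ := ξ * y with hu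
      set E : ℝ := Real.exp (-u) with hE
      set ψ : ℝ := z + Real.exp (-z) - 1 with hψ
      have hEpos : 0 < E := Real.exp_pos _
      have hψnn : 0 ≤ ψ := ham_aux_psi_nonneg z
      have hφ : (1 + u) * E ≤ 1 := ham_aux_phi_le_one u
      have key1 : 1 - h ≤ (1 + u) * E := by
        nlinarith [mul_nonneg (mul_nonneg hξ.le hEpos.le) hψnn]
      -- lower bound on y
      have hupos : 0 < 1 + u := by nlinarith
      have hylb : -1/ξ ≤ y := by
        rw [div_le_iff₀ hξ]; nlinarith
      -- upper bound on y
      have huB : u ≤ B := by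
        by_contra hc
        push_neg at hc
        have hBge : (1:ℝ) ≤ B := by
          have h9p : 0 < 9/(1-h) := by positivity
          rw [hB]; linarith
        have hu1 : 1 ≤ u := le_of_lt (lt_of_le_of_lt hBge hc)
        have hq : u^2/4 ≤ Real.exp u := ham_aux_exp_quad u (by linarith)
        have hEE : E * Real.exp u = 1 := by
          rw [hE, ← Real.exp_add]; simp
        have h9 : (1-h)*(1+9/(1-h)) = (1-h)+9 := by field_simp
        have h10 : (1-h)+9 < (1-h)*u := by
          rw [← h9]; exact mul_lt_mul_of_pos_left hc h1s
        have h11 : (1+u)*E*Real.exp u = 1+u := by rw [mul_assoc, hEE, mul_one]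
        have h12 : (1-h)*Real.exp u ≤ 1+u := by
          calc (1-h)*Real.exp u ≤ (1+u)*E*Real.exp u :=
                mul_le_mul_of_nonneg_right key1 (Real.exp_pos u).le
            _ = 1+u := h11
        nlinarith [mul_le_mul_of_nonneg_left hq h1s.le]
      have hyub : y ≤ B/ξ := by rw [le_div_iff₀ hξ]; nlinarith
      -- bound on ψ
      have hEB : Real.exp (-B) ≤ E := Real.exp_le_exp.mpr (by linarith)
      have hξEψ : ξ * E * ψ ≤ h := by nlinarith
      have hψM : ψ ≤ M := by
        have h13 : ξ * Real.exp (-B) * ψ ≤ h :=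
          le_trans (mul_le_mul_of_nonneg_right
            (mul_le_mul_of_nonneg_left hEB hξ.le) hψnn) hξEψ
        have h14 : Real.exp (-B) * Real.exp B = 1 := by
          rw [← Real.exp_add]; simp
        rw [hM, le_div_iff₀ hξ]
        nlinarith [Real.exp_pos B, Real.exp_pos (-B)]
      -- z bounds
      have hzub : z ≤ M + 1 := by
        have := Real.exp_pos (-z)
        rw [hψ] at hψM; linarith
      have hzlb : -(4*M+4) ≤ z := by
        rcases le_or_gt 0 z with hz | hz
        · linarith
        · by_contra hc
          push_neg at hc
          have hq := ham_aux_psi_quad z hz.le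
          rw [← hψ] at hq
          nlinarith [sq_nonneg (z + 4*M + 4)]
      exact ⟨⟨hylb, hyub⟩, ⟨hzlb, hzub⟩⟩
    exact ((Metric.isBounded_Icc _ _).prod (Metric.isBounded_Icc _ _)).subset hsub
  · -- Unbounded
    intro h1 hb
    obtain ⟨C, hC⟩ := isBounded_iff_forall_norm_le.mp hb
    have htnn : (0:ℝ) ≤ max 0 (C+1) := le_max_left _ _
    obtain ⟨z, hz⟩ := ham_exists_z ξ h (max 0 (C+1)) hξ h1 htnn
    have hmem : ((max 0 (C+1) : ℝ), z) ∈ {p : ℝ × ℝ | Ham ξ p.1 p.2 = h} := hz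
    have hCle := hC _ hmem
    have h18 : max 0 (C+1) ≤ ‖((max 0 (C+1) : ℝ), z)‖ := by
      have h' := norm_fst_le ((max 0 (C+1) : ℝ), z)
      rwa [Real.norm_of_nonneg htnn] at h'
    have h19 : C + 1 ≤ max 0 (C+1) := le_max_right _ _
    linarith
end

section
/- Let ξ > 0, α > 0, and let F : [0,∞) × ℝ → ℝ² be the de-singularized compactified reduced vector field in the chart at infinity, F(w,y) = (−w(α − ξy) + ξw²(1 − e^{−1/w}), −y(α − ξy) − w(1 + ξy)(1 − e^{−1/w})) for w > 0, extended by F(0,y) = (0, −y(α − ξy)). Then F is continuous on [0,∞) × ℝ, and its zeros on the line {w = 0} (the equator, corresponding to infinity) are exactly the two points Q¹ = (0,0) and Q³ = (0, α/ξ). -/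
/-- The exponentially flat function `w ↦ e^{−1/w}` for `w > 0`, extended by `0`
for `w ≤ 0`. -/
noncomputable def flatE (w : ℝ) : ℝ := if 0 < w then Real.exp (-1 / w) else 0

/-- The de-singularized compactified reduced vector field in the chart at infinity:
`F(w,y) = (−w(α − ξy) + ξw²(1 − e^{−1/w}), −y(α − ξy) − w(1 + ξy)(1 − e^{−1/w}))`
for `w > 0`, extended by `F(0,y) = (0, −y(α − ξy))`. -/
noncomputable def Fc (ξ α : ℝ) (p : ℝ × ℝ) : ℝ × ℝ :=
  (-p.1 * (α - ξ * p.2) + ξ * p.1 ^ 2 * (1 - flatE p.1),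
    -p.2 * (α - ξ * p.2) - p.1 * (1 + ξ * p.2) * (1 - flatE p.1))

/-- `F` agrees with the stated formulas, is continuous on `[0,∞) × ℝ`, and its
zeros on the equator `{w = 0}` are exactly `Q¹ = (0,0)` and `Q³ = (0, α/ξ)`. -/
theorem stmt12 (ξ α : ℝ) (hξ : 0 < ξ) (hα : 0 < α) :
    (∀ w y : ℝ, 0 < w →
      Fc ξ α (w, y) =
        (-w * (α - ξ * y) + ξ * w ^ 2 * (1 - Real.exp (-1 / w)),
          -y * (α - ξ * y) - w * (1 + ξ * y) * (1 - Real.exp (-1 / w)))) ∧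
    (∀ y : ℝ, Fc ξ α (0, y) = (0, -y * (α - ξ * y))) ∧
    ContinuousOn (Fc ξ α) (Set.Ici 0 ×ˢ Set.univ) ∧
    (∀ y : ℝ, Fc ξ α (0, y) = (0, 0) ↔ y = 0 ∨ y = α / ξ) := by
  refine ⟨?_, ?_, ?_, ?_⟩
  · intro w y hw
    simp [Fc, flatE, hw]
  · intro y
    simp [Fc, flatE]
  · have hE : ContinuousOn flatE (Set.Ici 0) := by
      intro w hw
      rcases eq_or_lt_of_le (Set.mem_Ici.mp hw) with h0 | h0
      · -- w = 0
        subst h0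
        have h0' : flatE 0 = 0 := by simp [flatE]
        rw [ContinuousWithinAt, h0']
        have hsub : Set.Ici (0:ℝ) ⊆ {0} ∪ Set.Ioi 0 := by
          intro x hx
          rcases eq_or_lt_of_le (Set.mem_Ici.mp hx) with h | h
          · exact Or.inl (by simp [h.symm])
          · exact Or.inr h
        refine Filter.Tendsto.mono_left ?_ (nhdsWithin_mono 0 hsub)
        rw [nhdsWithin_union, Filter.tendsto_sup]
        constructor
        · refine Filter.Tendsto.congr' ?_ tendsto_const_nhds
          filter_upwards [self_mem_nhdsWithin] with x hx
          · simp at hx; simp [hx, flatE]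
        · have h1 : Filter.Tendsto (fun x : ℝ => -1 / x) (nhdsWithin 0 (Set.Ioi 0))
              Filter.atBot := by
            have h := Filter.tendsto_neg_atTop_atBot.comp (tendsto_inv_nhdsGT_zero (𝕜 := ℝ))
            have : (fun x : ℝ => -1 / x) = fun x : ℝ => -(x⁻¹) := by
              funext x; rw [neg_div, one_div]
            rw [this]; exact h
          have h2 : Filter.Tendsto (fun x : ℝ => Real.exp (-1 / x))
              (nhdsWithin 0 (Set.Ioi 0)) (nhds 0) :=
            Real.tendsto_exp_atBot.comp h1
          refine Filter.Tendsto.congr' ?_ h2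
          filter_upwards [self_mem_nhdsWithin] with x hx
          · simp [flatE, Set.mem_Ioi.mp hx]
      · -- 0 < w
        have hcont : ContinuousAt flatE w := by
          have heq : ∀ᶠ x in nhds w, flatE x = Real.exp (-1 / x) := by
            filter_upwards [IsOpen.mem_nhds isOpen_Ioi (Set.mem_Ioi.mpr h0)] with x hx
            simp [flatE, Set.mem_Ioi.mp hx]
          have : ContinuousAt (fun x : ℝ => Real.exp (-1 / x)) w :=
            Real.continuous_exp.continuousAt.comp
              ((continuousAt_const.div continuousAt_id h0.ne'))
          exact this.congr (Filter.EventuallyEq.symm heq)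
        exact hcont.continuousWithinAt
    have hE2 : ContinuousOn (fun p : ℝ × ℝ => flatE p.1)
        (Set.Ici 0 ×ˢ (Set.univ : Set ℝ)) :=
      hE.comp continuous_fst.continuousOn (fun p hp => hp.1)
    unfold Fc
    apply ContinuousOn.prodMk
    · exact ((continuous_fst.neg.mul (continuous_const.sub
        (continuous_const.mul continuous_snd))).continuousOn).add
        (((continuous_const.mul (continuous_fst.pow 2)).continuousOn).mul
          (continuousOn_const.sub hE2))
    · exact ((continuous_snd.neg.mul (continuous_const.sub
        (continuous_const.mul continuous_snd))).continuousOn).sub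
        (((continuous_fst.mul (continuous_const.add
          (continuous_const.mul continuous_snd))).continuousOn).mul
          (continuousOn_const.sub hE2))
  · intro y
    have : Fc ξ α (0, y) = (0, -y * (α - ξ * y)) := by simp [Fc, flatE]
    rw [this, Prod.mk.injEq]
    constructor
    · rintro ⟨-, h⟩
      have h' : y = 0 ∨ α - ξ * y = 0 := by
        rcases mul_eq_zero.mp (by linarith [h] : -y * (α - ξ * y) = 0) with h | h
        · exact Or.inl (by linarith [neg_eq_zero.mp h])
        · exact Or.inr h
      rcases h' with h | h
      · exact Or.inl h
      · right; field_simp; linarith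
    · rintro (rfl | rfl)
      · simp
      · constructor
        · rfl
        · field_simp; ring
end

section
/- Let ξ > 0 and α > 0, and let F be as in the compactified chart: F(w,y) = (−w(α − ξy) + ξw²(1 − e^{−1/w}), −y(α − ξy) − w(1 + ξy)(1 − e^{−1/w})) for w > 0 and F(0,y) = (0, −y(α − ξy)). Then F is (Fréchet) differentiable at the fixed point Q¹ = (0,0) with derivative DF(0,0) = [[−α, 0], [−1, −α]]; this matrix has the double eigenvalue −α with one-dimensional eigenspace spanned by (0,1)ᵀ, so Q¹ is a stable improper node whose single eigenvector is tangent to the equator {w = 0}. -/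
/-- Quadratic lower bound giving exponential flatness: `e^{-1/w} ≤ 4 w²` for `w > 0`. -/
lemma flat_bound {w : ℝ} (hw : 0 < w) : Real.exp (-1/w) ≤ 4 * w^2 := by
  have h1 : (1/(2*w) + 1)^2 ≤ Real.exp (1/w) := by
    have := Real.add_one_le_exp (1/(2*w))
    calc (1/(2*w)+1)^2 ≤ (Real.exp (1/(2*w)))^2 := by
          apply pow_le_pow_left₀ (by positivity) this
      _ = Real.exp (1/w) := by
          rw [← Real.exp_nat_mul]; ring_nf
  have h2 : (1/(2*w))^2 ≤ Real.exp (1/w) := by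
    nlinarith [one_div_pos.mpr (mul_pos two_pos hw)]
  have h3 : Real.exp (-1/w) = (Real.exp (1/w))⁻¹ := by
    rw [neg_div, Real.exp_neg]
  rw [h3]
  have hp : (0:ℝ) < (1/(2*w))^2 := by positivity
  calc (Real.exp (1/w))⁻¹ ≤ ((1/(2*w))^2)⁻¹ := inv_anti₀ hp h2
    _ = 4 * w^2 := by field_simp; ring

/-- The flat function is differentiable at `0` with derivative `0`. -/
lemma flat_deriv : HasDerivAt flatE 0 0 := by
  rw [hasDerivAt_iff_isLittleO, Asymptotics.isLittleO_iff]
  intro ε hε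
  have hev : ∀ᶠ w : ℝ in nhds 0, |w| < ε / 4 := by
    have := Metric.ball_mem_nhds (0:ℝ) (show 0 < ε/4 by positivity)
    filter_upwards [this] with w hw
    simpa [Real.dist_eq] using hw
  filter_upwards [hev] with w hw
  simp only [flatE, lt_irrefl, if_false, sub_zero, smul_zero]
  by_cases h : 0 < w
  · rw [if_pos h, Real.norm_eq_abs, Real.norm_eq_abs, abs_of_pos (Real.exp_pos _),
      abs_of_pos h]
    calc Real.exp (-1/w) ≤ 4 * w^2 := flat_bound h
      _ = (4*w)*w := by ring
      _ ≤ ε * w := by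
          apply mul_le_mul_of_nonneg_right _ h.le
          rw [abs_of_pos h] at hw; linarith
  · rw [if_neg h]; simp [abs_nonneg]; positivity

/-- `F` is Fréchet differentiable at `Q¹ = (0,0)` with derivative
`DF(0,0) = [[−α,0],[−1,−α]]`; this matrix has the double eigenvalue `−α`, and its
eigenspace is one-dimensional, spanned by `(0,1)ᵀ` (tangent to the equator). -/
theorem stmt13 (ξ α : ℝ) (hξ : 0 < ξ) (hα : 0 < α) :
    (∃ L : ℝ × ℝ →L[ℝ] ℝ × ℝ,
      HasFDerivAt (Fc ξ α) L (0, 0) ∧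
      ∀ p : ℝ × ℝ, L p = (-α * p.1, -p.1 - α * p.2)) ∧
    (!![-α, 0; -1, -α] : Matrix (Fin 2) (Fin 2) ℝ).charpoly
      = (Polynomial.X - Polynomial.C (-α)) ^ 2 ∧
    (∀ μ : ℝ, (!![-α, 0; -1, -α] : Matrix (Fin 2) (Fin 2) ℝ).charpoly.IsRoot μ ↔ μ = -α) ∧
    (∀ v : Fin 2 → ℝ,
      (!![-α, 0; -1, -α] : Matrix (Fin 2) (Fin 2) ℝ).mulVec v = (-α) • v ↔
        ∃ c : ℝ, v = c • ![0, 1]) := by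
  have hchar : (!![-α, 0; -1, -α] : Matrix (Fin 2) (Fin 2) ℝ).charpoly
      = (Polynomial.X - Polynomial.C (-α)) ^ 2 := by
    rw [Matrix.charpoly, Matrix.det_fin_two]
    simp [Matrix.charmatrix_apply, sub_sq, map_neg]
    ring
  refine ⟨?_, hchar, ?_, ?_⟩
  · have hfst : HasFDerivAt (fun p : ℝ × ℝ => p.1) (ContinuousLinearMap.fst ℝ ℝ ℝ) (0,0) :=
      hasFDerivAt_fst
    have hsnd : HasFDerivAt (fun p : ℝ × ℝ => p.2) (ContinuousLinearMap.snd ℝ ℝ ℝ) (0,0) :=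
      hasFDerivAt_snd
    have hg : HasFDerivAt (fun p : ℝ × ℝ => flatE p.1)
        ((0:ℝ) • (ContinuousLinearMap.fst ℝ ℝ ℝ)) ((0,0) : ℝ × ℝ) :=
      by have := flat_deriv.comp_hasFDerivAt ((0,0) : ℝ × ℝ) hfst; exact this
    have hsq : HasFDerivAt (fun p : ℝ × ℝ => p.1 ^ 2)
        ((2 * (0:ℝ) ^ 1) • (ContinuousLinearMap.fst ℝ ℝ ℝ)) ((0,0) : ℝ × ℝ) :=
      by have := (hasDerivAt_pow 2 (0:ℝ)).comp_hasFDerivAt ((0,0) : ℝ × ℝ) hfst; exact this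
    have h1 := ((hfst.neg.mul ((hasFDerivAt_const α _).sub
        ((hasFDerivAt_const ξ _).mul hsnd))).add
        (((hasFDerivAt_const ξ _).mul hsq).mul
        ((hasFDerivAt_const 1 _).sub hg)))
    have h2 := ((hsnd.neg.mul ((hasFDerivAt_const α _).sub
        ((hasFDerivAt_const ξ _).mul hsnd))).sub
        ((hfst.mul ((hasFDerivAt_const 1 _).add
        ((hasFDerivAt_const ξ _).mul hsnd))).mul
        ((hasFDerivAt_const 1 _).sub hg)))
    refine ⟨_, (HasFDerivAt.prodMk h1 h2 : HasFDerivAt (Fc ξ α) _ (0,0)), ?_⟩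
    intro p
    simp [flatE]
    ring_nf
  · intro μ
    rw [hchar]
    simp [Polynomial.IsRoot, pow_eq_zero_iff, sub_eq_zero]
    constructor <;> intro h <;> linarith
  · intro v
    constructor
    · intro h
      refine ⟨v 1, ?_⟩
      have h1 := congrFun h 1
      simp [Matrix.mulVec, dotProduct, Fin.sum_univ_two] at h1
      funext i
      fin_cases i
      · simp; linarith
      · simp
    · rintro ⟨c, rfl⟩
      funext i
      fin_cases i <;> simp [Matrix.mulVec, dotProduct, Fin.sum_univ_two]
end

section
/- Let ξ > 0 and α > 0, and let F be as in the compactified chart: F(w,y) = (−w(α − ξy) + ξw²(1 − e^{−1/w}), −y(α − ξy) − w(1 + ξy)(1 − e^{−1/w})) for w > 0 and F(0,y) = (0, −y(α − ξy)). Then F is differentiable at the fixed point Q³ = (0, α/ξ) with derivative DF(0, α/ξ) = [[0, 0], [−(1+α), α]]; this matrix has eigenvalues α and 0, with eigenvector (0,1)ᵀ for the unstable eigenvalue α (tangent to the equator {w = 0}) and eigenvector (α, 1+α)ᵀ (equivalently (α/(1+α), 1)ᵀ) for the eigenvalue 0. -/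
section Aux
open Filter Asymptotics Topology

lemma flatE_nonpos {w : ℝ} (h : ¬ 0 < w) : flatE w = 0 := by simp [flatE, h]

lemma flatE_tendsto : Tendsto flatE (𝓝 0) (𝓝 0) := by
  have key : Tendsto flatE (𝓝[≤] (0:ℝ) ⊔ 𝓝[>] (0:ℝ)) (𝓝 0) := by
    rw [tendsto_sup]
    constructor
    · refine (tendsto_const_nhds : Tendsto (fun _ : ℝ => (0:ℝ)) (𝓝[≤] (0:ℝ)) (𝓝 0)).congr' ?_
      filter_upwards [eventually_mem_nhdsWithin] with w (hw : w ≤ 0)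
      exact (flatE_nonpos (not_lt.2 hw)).symm
    · have h1 : Tendsto (fun w : ℝ => -1 / w) (𝓝[>] 0) atBot := by
        have h0 := tendsto_inv_nhdsGT_zero (𝕜 := ℝ)
        have h2 := tendsto_neg_atTop_atBot.comp h0
        refine h2.congr fun w => ?_
        simp [neg_div]
      have h3 := Real.tendsto_exp_atBot.comp h1
      refine h3.congr' ?_
      filter_upwards [eventually_mem_nhdsWithin] with w (hw : 0 < w)
      simp [flatE, hw, Function.comp]
  rwa [nhdsLE_sup_nhdsGT] at key

lemma hm : HasDerivAt (fun w : ℝ => w * flatE w) 0 0 := by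
  rw [hasDerivAt_iff_isLittleO]
  have : (fun w : ℝ => w * flatE w) =o[𝓝 0] fun w => w * 1 :=
    (isBigO_refl (fun w : ℝ => w) _).mul_isLittleO
      ((Asymptotics.isLittleO_one_iff ℝ).2 flatE_tendsto)
  simpa [flatE_nonpos] using this

end Aux

/-- `F` is differentiable at `Q³ = (0, α/ξ)` with derivative
`DF(0,α/ξ) = [[0,0],[−(1+α),α]]`; this matrix has eigenvalues `α` and `0`, with
eigenvector `(0,1)ᵀ` for `α` (tangent to the equator) and eigenvector
`(α, 1+α)ᵀ` for `0`. -/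
theorem stmt14 (ξ α : ℝ) (hξ : 0 < ξ) (hα : 0 < α) :
    (∃ L : ℝ × ℝ →L[ℝ] ℝ × ℝ,
      HasFDerivAt (Fc ξ α) L (0, α / ξ) ∧
      ∀ p : ℝ × ℝ, L p = (0, -(1 + α) * p.1 + α * p.2)) ∧
    (∀ μ : ℝ,
      (!![0, 0; -(1 + α), α] : Matrix (Fin 2) (Fin 2) ℝ).charpoly.IsRoot μ ↔
        μ = α ∨ μ = 0) ∧
    (!![0, 0; -(1 + α), α] : Matrix (Fin 2) (Fin 2) ℝ).mulVec ![0, 1] = α • ![0, 1] ∧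
    (!![0, 0; -(1 + α), α] : Matrix (Fin 2) (Fin 2) ℝ).mulVec ![α, 1 + α] = 0 := by
  refine ⟨?_, ?_, ?_, ?_⟩
  · set x₀ : ℝ × ℝ := (0, α / ξ) with hx₀
    have hM : HasFDerivAt (fun p : ℝ × ℝ => p.1 * flatE p.1)
        (0 : ℝ × ℝ →L[ℝ] ℝ) x₀ := by
      have := HasDerivAt.comp_hasFDerivAt_of_eq x₀ hm
        (hasFDerivAt_fst : HasFDerivAt Prod.fst (ContinuousLinearMap.fst ℝ ℝ ℝ) x₀) rfl
      simpa [Function.comp_def] using this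
    have h1 : HasFDerivAt (fun p : ℝ × ℝ => p.1) (ContinuousLinearMap.fst ℝ ℝ ℝ) x₀ :=
      hasFDerivAt_fst
    have h2 : HasFDerivAt (fun p : ℝ × ℝ => p.2) (ContinuousLinearMap.snd ℝ ℝ ℝ) x₀ :=
      hasFDerivAt_snd
    have hd1 := ((h1.mul_const α).neg.add ((h1.mul h2).const_mul ξ)).add
      (((h1.mul h1).const_mul ξ).sub ((h1.mul hM).const_mul ξ))
    have hd2 := ((((h2.mul_const α).neg.add ((h2.mul h2).const_mul ξ)).sub h1).sub
      ((h1.mul h2).const_mul ξ)).add (hM.add ((h2.mul hM).const_mul ξ))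
    have hd := HasFDerivAt.prodMk hd1 hd2
    have hfc : Fc ξ α = fun p : ℝ × ℝ =>
        (-(p.1 * α) + ξ * (p.1 * p.2) + (ξ * (p.1 * p.1) - ξ * (p.1 * (p.1 * flatE p.1))),
         -(p.2 * α) + ξ * (p.2 * p.2) - p.1 - ξ * (p.1 * p.2)
           + (p.1 * flatE p.1 + ξ * (p.2 * (p.1 * flatE p.1)))) := by
      funext p
      simp only [Fc, Prod.mk.injEq]
      constructor <;> ring
    refine ⟨_, hfc ▸ hd, fun p => ?_⟩
    have hx1 : x₀.1 = 0 := rfl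
    have hx2 : x₀.2 = α / ξ := rfl
    have hξ' : ξ ≠ 0 := ne_of_gt hξ
    simp [hx1, hx2, flatE_nonpos (lt_irrefl (0:ℝ)), Prod.ext_iff]
    constructor <;> field_simp <;> ring
  · intro μ
    have hch : (!![0, 0; -(1 + α), α] : Matrix (Fin 2) (Fin 2) ℝ).charpoly
        = Polynomial.X * (Polynomial.X - Polynomial.C α) := by
      rw [Matrix.charpoly, Matrix.det_fin_two]
      simp [Matrix.charmatrix_apply_eq, Matrix.charmatrix_apply_ne]
    rw [hch]
    simp [Polynomial.IsRoot, mul_eq_zero, sub_eq_zero, or_comm]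
  · funext i
    fin_cases i <;> simp [Matrix.mulVec, dotProduct]
  · funext i
    fin_cases i <;> simp [Matrix.mulVec, dotProduct] <;> ring
end

section
/- Let ξ > 0. For w > 0 and y ∈ ℝ, the Hamiltonian level condition H(y/w, 1/w) = 1 holds if and only if ξ(y − 1) + w(ξ + 1) − ξ·w·e^{−1/w} = 0, i.e. if and only if y = 1 − w(ξ+1)/ξ + w·e^{−1/w}. Moreover this unique solution y(w) tends to 1 as w → 0⁺; hence the level set {H = 1}, written in the chart at infinity (y₃, w₃) = (y/z, 1/z), limits onto the point (y₃, w₃) = (1, 0), which is the fixed point Q³ for α = ξ. -/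
/-- In the chart at infinity `(y₃,w₃) = (y/z, 1/z)` the level condition `H = 1`
reads `ξ(y−1) + w(ξ+1) − ξwe^{−1/w} = 0`, i.e. `y = 1 − w(ξ+1)/ξ + we^{−1/w}`, and
this unique solution tends to `1` as `w → 0⁺`, so `{H = 1}` limits onto the point
`(y₃,w₃) = (1,0)`, the fixed point `Q³` for `α = ξ`. -/
theorem stmt15 (ξ : ℝ) (hξ : 0 < ξ) :
    (∀ w y : ℝ, 0 < w →
      ((Ham ξ (y / w) (1 / w) = 1 ↔
          ξ * (y - 1) + w * (ξ + 1) - ξ * w * Real.exp (-1 / w) = 0) ∧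
        (Ham ξ (y / w) (1 / w) = 1 ↔
          y = 1 - w * (ξ + 1) / ξ + w * Real.exp (-1 / w)))) ∧
    Filter.Tendsto (fun w : ℝ => 1 - w * (ξ + 1) / ξ + w * Real.exp (-1 / w))
      (nhdsWithin 0 (Set.Ioi 0)) (nhds 1) := by
  constructor
  · intro w y hw
    have hw0 : w ≠ 0 := ne_of_gt hw
    have hξ0 : ξ ≠ 0 := ne_of_gt hξ
    have hexp : Real.exp (-ξ * (y / w)) ≠ 0 := Real.exp_ne_zero _
    have hne : -(1 / w) = -1 / w := by ring
    have hB : Ham ξ (y / w) (1 / w) = 1 ↔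
        ξ * (y / w) - ξ * (1 / w) + ξ + 1 - ξ * Real.exp (-1 / w) = 0 := by
      unfold Ham
      rw [hne]
      constructor
      · intro h
        have h1 : Real.exp (-ξ * (y / w)) *
            (ξ * (y / w) - ξ * (1 / w) + ξ + 1 - ξ * Real.exp (-1 / w)) = 0 := by linarith
        rcases mul_eq_zero.mp h1 with h' | h'
        · exact absurd h' hexp
        · exact h'
      · intro h
        rw [h, mul_zero]; ring
    have key : Ham ξ (y / w) (1 / w) = 1 ↔
        ξ * (y - 1) + w * (ξ + 1) - ξ * w * Real.exp (-1 / w) = 0 := by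
      refine hB.trans ?_
      constructor
      · intro h
        have h2 := congrArg (· * w) h
        simp only [zero_mul] at h2
        field_simp at h2
        rw [hne] at h2
        nlinarith [h2]
      · intro h
        field_simp
        rw [← hne] at h
        nlinarith [h]
    refine ⟨key, key.trans ?_⟩
    constructor
    · intro h
      field_simp
      rw [← hne] at h
      nlinarith [h]
    · intro h
      rw [h]; field_simp; ring
  · have h1 : Filter.Tendsto (fun w : ℝ => w * Real.exp (-1 / w))
        (nhdsWithin 0 (Set.Ioi 0)) (nhds 0) := by
      apply squeeze_zero_norm' (a := fun w : ℝ => w) ?_ ?_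
      · filter_upwards [self_mem_nhdsWithin] with w hw
        have hw : (0:ℝ) < w := hw
        have he : Real.exp (-1 / w) ≤ 1 := by
          apply Real.exp_le_one_iff.mpr
          have h0 : (0:ℝ) < 1 / w := by positivity
          rw [neg_div]; linarith
        rw [Real.norm_eq_abs, abs_mul, abs_of_pos hw, abs_of_pos (Real.exp_pos _)]
        nlinarith [Real.exp_pos (-1 / w)]
      · exact Filter.tendsto_id.mono_left nhdsWithin_le_nhds
    have h2 : Filter.Tendsto (fun w : ℝ => w * (ξ + 1) / ξ)
        (nhdsWithin 0 (Set.Ioi 0)) (nhds 0) := by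
      have hc : Filter.Tendsto (fun w : ℝ => w * (ξ + 1) / ξ) (nhds 0)
          (nhds (0 * (ξ + 1) / ξ)) :=
        ((continuous_id.mul continuous_const).div_const ξ).tendsto 0
      simpa using hc.mono_left nhdsWithin_le_nhds
    have h3 := (Filter.Tendsto.sub (tendsto_const_nhds (x := (1:ℝ))) h2).add h1
    simpa using h3
end

section
/- Let ξ > 0. For ρ > 0 and η > 0, the Hamiltonian level condition H(e^{1/ρ}/η, −1/ρ) = 1 holds if and only if 1/η − 1 + e^{−1/ρ}(1/ρ + 1 + 1/ξ) = 0; for all sufficiently small ρ > 0 there is a unique positive solution η(ρ) = (1 − e^{−1/ρ}(1/ρ + 1 + 1/ξ))^{−1}, and η(ρ) → 1 as ρ → 0⁺. Hence in the blown-up coordinates the level set {H = 1} limits onto the point (ρ, η) = (0, 1), which is the fixed point Q⁶. -/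
open Filter Real

lemma ham_iff_aux (ξ ρ η : ℝ) (hξ : 0 < ξ) (hη : 0 < η) :
    Ham ξ (Real.exp (1 / ρ) / η) (-1 / ρ) = 1 ↔
      1 / η - 1 + Real.exp (-1 / ρ) * (1 / ρ + 1 + 1 / ξ) = 0 := by
  have he : Real.exp (1 / ρ) ≠ 0 := Real.exp_ne_zero _
  have hE : Real.exp (-1 / ρ) = (Real.exp (1 / ρ))⁻¹ := by
    rw [neg_div, Real.exp_neg]
  unfold Ham
  rw [show -(-1 / ρ) = 1 / ρ by ring, hE]
  set A := Real.exp (-ξ * (Real.exp (1 / ρ) / η)) with hA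
  have hApos : 0 < A := Real.exp_pos _
  have hid : ξ * (Real.exp (1 / ρ) / η) - ξ * (-1 / ρ) + ξ + 1 - ξ * Real.exp (1 / ρ)
      = (ξ * Real.exp (1 / ρ)) * (1 / η - 1 + (Real.exp (1 / ρ))⁻¹ * (1 / ρ + 1 + 1 / ξ)) := by
    field_simp
    ring
  constructor
  · intro h
    have h0 : A * ((ξ * Real.exp (1 / ρ)) *
        (1 / η - 1 + (Real.exp (1 / ρ))⁻¹ * (1 / ρ + 1 + 1 / ξ))) = 0 := by
      rw [← hid]; linarith
    rcases mul_eq_zero.mp h0 with h' | h'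
    · exact absurd h' hApos.ne'
    rcases mul_eq_zero.mp h' with h'' | h''
    · exact absurd h'' (by positivity)
    · exact h''
  · intro h
    rw [hid, h]
    ring

lemma small_lemma_aux (c t : ℝ) (hc : 0 ≤ c) (ht : 2 * Real.sqrt c + 1 < t) :
    Real.exp (-t) * (t + 1 + c) < 1 := by
  have hs : 0 ≤ Real.sqrt c := Real.sqrt_nonneg c
  have ht0 : 0 < t := by linarith
  have h1 : t / 2 + 1 ≤ Real.exp (t / 2) := Real.add_one_le_exp (t / 2)
  have h2 : Real.exp t = Real.exp (t / 2) * Real.exp (t / 2) := by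
    rw [← Real.exp_add]; ring_nf
  have hsq : Real.sqrt c ^ 2 = c := Real.sq_sqrt hc
  have h3 : t + 1 + c < Real.exp t := by nlinarith
  rw [Real.exp_neg t, inv_mul_lt_iff₀ (Real.exp_pos t)]
  linarith

lemma tend_lemma_aux (c : ℝ) :
    Filter.Tendsto (fun ρ : ℝ => (1 - Real.exp (-1 / ρ) * (1 / ρ + 1 + c))⁻¹)
      (nhdsWithin 0 (Set.Ioi 0)) (nhds 1) := by
  have h1 : Tendsto (fun ρ : ℝ => 1 / ρ) (nhdsWithin 0 (Set.Ioi 0)) atTop := by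
    simpa [one_div] using tendsto_inv_nhdsGT_zero (𝕜 := ℝ)
  have hg : Tendsto (fun t : ℝ => Real.exp (-t) * (t + 1 + c)) atTop (nhds 0) := by
    have ha : Tendsto (fun t : ℝ => t * Real.exp (-t)) atTop (nhds 0) := by
      simpa using Real.tendsto_pow_mul_exp_neg_atTop_nhds_zero 1
    have hb : Tendsto (fun t : ℝ => Real.exp (-t)) atTop (nhds 0) :=
      Real.tendsto_exp_neg_atTop_nhds_zero
    have := (ha.add (hb.const_mul (1 + c)))
    simpa using this.congr (fun t => by ring)
  have hcomp : Tendsto (fun ρ : ℝ => Real.exp (-1 / ρ) * (1 / ρ + 1 + c))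
      (nhdsWithin 0 (Set.Ioi 0)) (nhds 0) := by
    refine (hg.comp h1).congr fun ρ => ?_
    simp [Function.comp, neg_div]
  have hD : Tendsto (fun ρ : ℝ => 1 - Real.exp (-1 / ρ) * (1 / ρ + 1 + c))
      (nhdsWithin 0 (Set.Ioi 0)) (nhds 1) := by
    simpa using (tendsto_const_nhds (x := (1:ℝ))).sub hcomp
  simpa using hD.inv₀ (by norm_num)

/-- In the blown-up coordinates `(ρ,η)` with `(y,z) = (e^{1/ρ}/η, −1/ρ)`, the level
condition `H = 1` reads `1/η − 1 + e^{−1/ρ}(1/ρ + 1 + 1/ξ) = 0`; for small `ρ > 0`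
its unique positive solution is `η(ρ) = (1 − e^{−1/ρ}(1/ρ + 1 + 1/ξ))⁻¹`, and
`η(ρ) → 1` as `ρ → 0⁺`, so `{H = 1}` limits onto the fixed point `Q⁶ = (0,1)`. -/
theorem stmt16 (ξ : ℝ) (hξ : 0 < ξ) :
    (∀ ρ η : ℝ, 0 < ρ → 0 < η →
      (Ham ξ (Real.exp (1 / ρ) / η) (-1 / ρ) = 1 ↔
        1 / η - 1 + Real.exp (-1 / ρ) * (1 / ρ + 1 + 1 / ξ) = 0)) ∧
    (∃ ρ₀ > (0 : ℝ), ∀ ρ : ℝ, 0 < ρ → ρ < ρ₀ →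
      0 < (1 - Real.exp (-1 / ρ) * (1 / ρ + 1 + 1 / ξ))⁻¹ ∧
      ∀ η : ℝ, 0 < η →
        (Ham ξ (Real.exp (1 / ρ) / η) (-1 / ρ) = 1 ↔
          η = (1 - Real.exp (-1 / ρ) * (1 / ρ + 1 + 1 / ξ))⁻¹)) ∧
    Filter.Tendsto (fun ρ : ℝ => (1 - Real.exp (-1 / ρ) * (1 / ρ + 1 + 1 / ξ))⁻¹)
      (nhdsWithin 0 (Set.Ioi 0)) (nhds 1) := by
  refine ⟨fun ρ η hρ hη => ham_iff_aux ξ ρ η hξ hη, ?_, tend_lemma_aux (1 / ξ)⟩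
  refine ⟨(2 * Real.sqrt (1 / ξ) + 1)⁻¹, by positivity, fun ρ hρ hρ₀ => ?_⟩
  have hc : (0:ℝ) ≤ 1 / ξ := by positivity
  have hρ₀pos : (0:ℝ) < (2 * Real.sqrt (1 / ξ) + 1)⁻¹ := by positivity
  have ht : 2 * Real.sqrt (1 / ξ) + 1 < 1 / ρ := by
    have := one_div_lt_one_div_of_lt hρ hρ₀
    rwa [one_div, inv_inv] at this
  have hE : Real.exp (-(1 / ρ)) * (1 / ρ + 1 + 1 / ξ) < 1 :=
    small_lemma_aux (1 / ξ) (1 / ρ) hc ht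
  have hE' : Real.exp (-1 / ρ) * (1 / ρ + 1 + 1 / ξ) < 1 := by rwa [neg_div]
  have hD : 0 < 1 - Real.exp (-1 / ρ) * (1 / ρ + 1 + 1 / ξ) := by linarith
  refine ⟨by positivity, fun η hη => ?_⟩
  rw [ham_iff_aux ξ ρ η hξ hη]
  constructor
  · intro h
    have hinv : η⁻¹ = 1 - Real.exp (-1 / ρ) * (1 / ρ + 1 + 1 / ξ) := by
      rw [← one_div]; linarith
    rw [inv_eq_iff_eq_inv] at hinv
    exact hinv
  · intro h
    rw [h, one_div, inv_inv]
    ring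
end

section
/- Let α > 0 and ξ > 0 and consider the planar system σ̇ = −2σ(y − α/ξ), ẏ = σ (the blown-up dynamics along the line L₀ at infinity). Then: (i) the function V(σ, y) = σ − 2(α/ξ)y + y² is a first integral, i.e. ⟨∇V(σ,y), (−2σ(y − α/ξ), σ)⟩ = 0 for all (σ, y); (ii) the parabolic arc γ = {(σ, y) : σ = 2(α/ξ)y − y², 0 < y < 2α/ξ} is invariant, and every solution starting on γ is defined for all t ∈ ℝ, has y strictly increasing, and converges to (0, 2α/ξ) as t → +∞ and to (0, 0) as t → −∞. Hence γ is a heteroclinic connection between the fixed points (0,0) and (0, 2α/ξ) (corresponding to Q² and Q⁴). -/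
/-- The blown-up planar vector field along the line `L₀` at infinity:
`σ̇ = −2σ(y − α/ξ)`, `ẏ = σ`. -/
noncomputable def blowField (α ξ : ℝ) (p : ℝ × ℝ) : ℝ × ℝ :=
  (-2 * p.1 * (p.2 - α / ξ), p.1)

/-- The first integral `V(σ,y) = σ − 2(α/ξ)y + y²`. -/
noncomputable def Vint (α ξ : ℝ) (σ y : ℝ) : ℝ := σ - 2 * (α / ξ) * y + y ^ 2

/-- The parabolic arc `γ = {σ = 2(α/ξ)y − y², 0 < y < 2α/ξ}`. -/
def blowArc (α ξ : ℝ) : Set (ℝ × ℝ) :=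
  {p : ℝ × ℝ | p.1 = 2 * (α / ξ) * p.2 - p.2 ^ 2 ∧ 0 < p.2 ∧ p.2 < 2 * α / ξ}

open Real Filter Set Metric

open Real Filter Set Metric

/-- denominator positivity -/
lemma zden_pos (β c t : ℝ) (hc : 0 < c) : 0 < 1 + c * Real.exp (2*β*t) := by
  positivity

noncomputable def zfun (β c t : ℝ) : ℝ :=
  2*β*c*Real.exp (2*β*t) / (1 + c*Real.exp (2*β*t))

lemma zfun_pos (β c t : ℝ) (hβ : 0 < β) (hc : 0 < c) : 0 < zfun β c t := by
  unfold zfun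
  have := Real.exp_pos (2*β*t)
  positivity

lemma zfun_lt (β c t : ℝ) (hβ : 0 < β) (hc : 0 < c) : zfun β c t < 2*β := by
  unfold zfun
  rw [div_lt_iff₀ (zden_pos β c t hc)]
  have := Real.exp_pos (2*β*t)
  nlinarith

lemma zfun_hasDeriv (β c t : ℝ) (hc : 0 < c) :
    HasDerivAt (zfun β c) (2*β*(zfun β c t) - (zfun β c t)^2) t := by
  have he : HasDerivAt (fun t => Real.exp (2*β*t)) (Real.exp (2*β*t) * (2*β)) t := by
    have := (Real.hasDerivAt_exp (2*β*t)).comp t ((hasDerivAt_id t).const_mul (2*β))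
    simp only [mul_one, id_eq] at this
    exact this
  have hN : HasDerivAt (fun t => 2*β*c*Real.exp (2*β*t))
      (2*β*c*(Real.exp (2*β*t) * (2*β))) t := he.const_mul _
  have hD : HasDerivAt (fun t => 1 + c*Real.exp (2*β*t))
      (c*(Real.exp (2*β*t) * (2*β))) t := (he.const_mul c).const_add 1
  have hne : (1 + c*Real.exp (2*β*t)) ≠ 0 := (zden_pos β c t hc).ne'
  have := hN.div hD hne
  refine this.congr_deriv ?_
  unfold zfun
  field_simp

lemma zfun_tendsto_atTop (β c : ℝ) (hβ : 0 < β) (hc : 0 < c) :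
    Tendsto (zfun β c) atTop (nhds (2*β)) := by
  have hD : Tendsto (fun t => 1 + c*Real.exp (2*β*t)) atTop atTop := by
    apply tendsto_atTop_add_const_left
    exact (tendsto_exp_atTop.comp ((tendsto_id (α := ℝ)).const_mul_atTop (by positivity))).const_mul_atTop hc
  have h1 : Tendsto (fun t => (2*β) / (1 + c*Real.exp (2*β*t))) atTop (nhds 0) :=
    Tendsto.div_atTop tendsto_const_nhds hD
  have h2 : Tendsto (fun t => 2*β - (2*β) / (1 + c*Real.exp (2*β*t))) atTop (nhds (2*β - 0)) :=
    tendsto_const_nhds.sub h1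
  rw [sub_zero] at h2
  apply h2.congr
  intro t
  have hne : (1 + c*Real.exp (2*β*t)) ≠ 0 := (zden_pos β c t hc).ne'
  unfold zfun
  field_simp
  ring

lemma zfun_tendsto_atBot (β c : ℝ) (hβ : 0 < β) (hc : 0 < c) :
    Tendsto (zfun β c) atBot (nhds 0) := by
  have he : Tendsto (fun t => Real.exp (2*β*t)) atBot (nhds 0) := by
    apply Real.tendsto_exp_atBot.comp
    exact (tendsto_id (α := ℝ)).const_mul_atBot (by positivity)
  have hN : Tendsto (fun t => 2*β*c*Real.exp (2*β*t)) atBot (nhds (2*β*c*0)) :=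
    tendsto_const_nhds.mul he
  have hD : Tendsto (fun t => 1 + c*Real.exp (2*β*t)) atBot (nhds (1 + c*0)) :=
    tendsto_const_nhds.add (tendsto_const_nhds.mul he)
  have := hN.div hD (by norm_num)
  simp only [Pi.div_def, mul_zero, add_zero, zero_div] at this
  exact this

lemma lipsOn (β c : ℝ) (hβ : 0 ≤ β) :
    LipschitzOnWith (Real.toNNReal (2*β + 2*(|c|+1)))
      (fun x => 2*β*x - x^2) (Metric.closedBall c 1) := by
  rw [lipschitzOnWith_iff_dist_le_mul]
  intro a ha b hb
  rw [Real.dist_eq, Real.dist_eq, Real.coe_toNNReal _ (by positivity)]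
  have ha' : |a| ≤ |c| + 1 := by
    have := mem_closedBall.mp ha
    rw [Real.dist_eq] at this
    calc |a| = |(a - c) + c| := by ring_nf
    _ ≤ |a - c| + |c| := abs_add_le _ _
    _ ≤ |c| + 1 := by linarith
  have hb' : |b| ≤ |c| + 1 := by
    have := mem_closedBall.mp hb
    rw [Real.dist_eq] at this
    calc |b| = |(b - c) + c| := by ring_nf
    _ ≤ |b - c| + |c| := abs_add_le _ _
    _ ≤ |c| + 1 := by linarith
  have key : 2*β*a - a^2 - (2*β*b - b^2) = (2*β - (a+b)) * (a - b) := by ring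
  rw [key, abs_mul]
  apply mul_le_mul_of_nonneg_right _ (abs_nonneg _)
  calc |2*β - (a+b)| ≤ |2*β| + |a+b| := abs_sub _ _
  _ ≤ 2*β + (|a| + |b|) := by
      have := abs_add_le a b
      have h2 : |2*β| = 2*β := abs_of_nonneg (by positivity)
      linarith
  _ ≤ 2*β + 2*(|c|+1) := by linarith

lemma zfun_init (β y0 : ℝ) (h1 : 0 < y0) (h2 : y0 < 2*β) :
    zfun β (y0/(2*β - y0)) 0 = y0 := by
  have hne : 2*β - y0 ≠ 0 := by linarith
  unfold zfun
  rw [mul_zero, Real.exp_zero, mul_one, mul_one]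
  have hb2 : (2*β) ≠ 0 := by linarith
  field_simp
  rw [sub_add_cancel, div_self hb2]


lemma scalar_unique (β : ℝ) (hβ : 0 ≤ β) (y z : ℝ → ℝ)
    (hy : ∀ t, HasDerivAt y (2*β*(y t) - (y t)^2) t)
    (hz : ∀ t, HasDerivAt z (2*β*(z t) - (z t)^2) t)
    (h0 : y 0 = z 0) : ∀ t, y t = z t := by
  have hyc : Continuous y := continuous_iff_continuousAt.mpr fun t => (hy t).continuousAt
  have hzc : Continuous z := continuous_iff_continuousAt.mpr fun t => (hz t).continuousAt
  have hopen : IsOpen {t | y t = z t} := by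
    rw [isOpen_iff_mem_nhds]
    intro t₀ ht₀
    have hf : ∀ᶠ t in nhds t₀, HasDerivAt y (2*β*(y t) - (y t)^2) t ∧
        y t ∈ Metric.closedBall (y t₀) 1 := by
      have hm : {t | y t ∈ Metric.closedBall (y t₀) 1} ∈ nhds t₀ :=
        hyc.continuousAt.preimage_mem_nhds (closedBall_mem_nhds _ one_pos)
      filter_upwards [hm] with t ht using ⟨hy t, ht⟩
    have hg : ∀ᶠ t in nhds t₀, HasDerivAt z (2*β*(z t) - (z t)^2) t ∧
        z t ∈ Metric.closedBall (y t₀) 1 := by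
      have hm : {t | z t ∈ Metric.closedBall (y t₀) 1} ∈ nhds t₀ := by
        apply hzc.continuousAt.preimage_mem_nhds
        rw [ht₀]
        exact closedBall_mem_nhds _ one_pos
      filter_upwards [hm] with t ht using ⟨hz t, ht⟩
    exact ODE_solution_unique_of_eventually
      (v := fun _ x => 2*β*x - x^2) (s := fun _ => Metric.closedBall (y t₀) 1)
      (Filter.Eventually.of_forall fun _ => lipsOn β (y t₀) hβ) hf hg ht₀
  have hclosed : IsClosed {t | y t = z t} := isClosed_eq hyc hzc
  have := (isClopen_iff.mp ⟨hclosed, hopen⟩).resolve_left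
    (Set.nonempty_iff_ne_empty.mp ⟨0, h0⟩)
  intro t
  exact (Set.eq_univ_iff_forall.mp this t)

/-- (i) `V(σ,y) = σ − 2(α/ξ)y + y²` is a first integral of the blown-up system
`σ̇ = −2σ(y − α/ξ)`, `ẏ = σ`; (ii) the parabolic arc is invariant, through every
point of it there is a globally defined solution, and every global solution
starting on the arc stays on it, has strictly increasing `y`, and converges to
`(0, 2α/ξ)` as `t → +∞` and to `(0,0)` as `t → −∞` (a heteroclinic connection
between `Q²` and `Q⁴`). -/
theorem stmt18 (α ξ : ℝ) (hα : 0 < α) (hξ : 0 < ξ) :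
    (∀ σ y : ℝ,
      deriv (fun σ' => Vint α ξ σ' y) σ * (blowField α ξ (σ, y)).1 +
        deriv (fun y' => Vint α ξ σ y') y * (blowField α ξ (σ, y)).2 = 0) ∧
    (∀ p ∈ blowArc α ξ, ∃ γ : ℝ → ℝ × ℝ, γ 0 = p ∧
      ∀ t : ℝ, HasDerivAt γ (blowField α ξ (γ t)) t) ∧
    (∀ γ : ℝ → ℝ × ℝ, (∀ t : ℝ, HasDerivAt γ (blowField α ξ (γ t)) t) →
      γ 0 ∈ blowArc α ξ →
      (∀ t : ℝ, γ t ∈ blowArc α ξ) ∧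
      StrictMono (fun t => (γ t).2) ∧
      Filter.Tendsto γ Filter.atTop (nhds (0, 2 * α / ξ)) ∧
      Filter.Tendsto γ Filter.atBot (nhds (0, 0))) := by
  have hβ : 0 < α / ξ := div_pos hα hξ
  have h2β : 2 * α / ξ = 2 * (α / ξ) := by ring
  refine ⟨?_, ?_, ?_⟩
  · -- (i) first integral
    intro σ y
    have h1 : deriv (fun σ' => Vint α ξ σ' y) σ = 1 := by
      have : HasDerivAt (fun σ' : ℝ => Vint α ξ σ' y) 1 σ := by
        unfold Vint
        simpa using ((hasDerivAt_id σ).sub_const (2*(α/ξ)*y)).add_const (y^2)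
      exact this.deriv
    have h2 : deriv (fun y' => Vint α ξ σ y') y = -(2*(α/ξ)) + 2*y := by
      have : HasDerivAt (fun y' : ℝ => Vint α ξ σ y') ((0 - 2*(α/ξ)*1) + (2:ℕ)*y^(2-1)) y := by
        unfold Vint
        exact ((hasDerivAt_const y σ).sub ((hasDerivAt_id y).const_mul _)).add
          (hasDerivAt_pow 2 y)
      have h := this.deriv
      rw [h]; push_cast; ring
    rw [h1, h2]
    simp only [blowField]
    ring
  · -- (ii) existence of a global solution through any point of the arc
    rintro p ⟨hp1, hp2, hp3⟩
    rw [h2β] at hp3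
    have hne : 2*(α/ξ) - p.2 ≠ 0 := by linarith
    set c : ℝ := p.2 / (2*(α/ξ) - p.2) with hcdef
    have hc : 0 < c := div_pos hp2 (by linarith)
    set z : ℝ → ℝ := zfun (α/ξ) c with hzdef
    have hz0 : z 0 = p.2 := by
      rw [hzdef, hcdef]
      exact zfun_init (α/ξ) p.2 hp2 hp3
    refine ⟨fun t => (2*(α/ξ)*(z t) - (z t)^2, z t), ?_, ?_⟩
    · show (2*(α/ξ)*(z 0) - (z 0)^2, z 0) = p
      rw [hz0, ← hp1]
    · intro t
      have hz' := zfun_hasDeriv (α/ξ) c t hc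
      have hA : HasDerivAt (fun t => 2*(α/ξ)*(z t) - (z t)^2)
          (2*(α/ξ)*(2*(α/ξ)*(z t) - (z t)^2) - (2:ℕ)*(z t)^(2-1)*(2*(α/ξ)*(z t) - (z t)^2)) t :=
        (hz'.const_mul _).sub (hz'.pow 2)
      have h := hA.prodMk hz'
      convert h using 1
      simp only [blowField]
      refine Prod.ext ?_ ?_
      · show -2 * (2*(α/ξ)*(z t) - (z t)^2) * (z t - α/ξ) = _
        push_cast
        ring
      · rfl
  · -- (iii) global solutions starting on the arc
    intro γ hγ h0
    obtain ⟨h01, h02, h03⟩ := h0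
    rw [h2β] at h03
    set y : ℝ → ℝ := fun t => (γ t).2 with hydef
    set σf : ℝ → ℝ := fun t => (γ t).1 with hσdef
    have hy' : ∀ t, HasDerivAt y (σf t) t := fun t =>
      (ContinuousLinearMap.snd ℝ ℝ ℝ).hasFDerivAt.comp_hasDerivAt t (hγ t)
    have hσ' : ∀ t, HasDerivAt σf (-2 * σf t * (y t - α/ξ)) t := fun t =>
      (ContinuousLinearMap.fst ℝ ℝ ℝ).hasFDerivAt.comp_hasDerivAt t (hγ t)
    -- the first integral is constant along γ
    have hW' : ∀ t, HasDerivAt (fun t => σf t - 2*(α/ξ)*(y t) + (y t)^2) 0 t := by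
      intro t
      have h := ((hσ' t).sub ((hy' t).const_mul (2*(α/ξ)))).add ((hy' t).pow 2)
      refine h.congr_deriv ?_
      push_cast
      ring
    have hWconst : ∀ t, σf t - 2*(α/ξ)*(y t) + (y t)^2 = 0 := by
      have hd : Differentiable ℝ (fun t => σf t - 2*(α/ξ)*(y t) + (y t)^2) :=
        fun t => (hW' t).differentiableAt
      have := is_const_of_deriv_eq_zero hd (fun t => (hW' t).deriv)
      intro t
      have h := this t 0
      have h0' : σf 0 - 2*(α/ξ)*(y 0) + (y 0)^2 = 0 := by
        have : σf 0 = 2*(α/ξ)*(y 0) - (y 0)^2 := h01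
        rw [this]; ring
      rw [h]; exact h0'
    have hσeq : ∀ t, σf t = 2*(α/ξ)*(y t) - (y t)^2 := by
      intro t
      have := hWconst t
      linarith
    have hy2 : ∀ t, HasDerivAt y (2*(α/ξ)*(y t) - (y t)^2) t := by
      intro t
      have := hy' t
      rwa [hσeq t] at this
    -- identify y with the explicit logistic solution
    have hne : 2*(α/ξ) - y 0 ≠ 0 := by have : y 0 < 2*(α/ξ) := h03; linarith
    set c : ℝ := y 0 / (2*(α/ξ) - y 0) with hcdef
    have hc : 0 < c := div_pos h02 (by have : y 0 < 2*(α/ξ) := h03; linarith)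
    have hz0 : zfun (α/ξ) c 0 = y 0 := by
      rw [hcdef]
      exact zfun_init (α/ξ) (y 0) h02 h03
    have hyz : ∀ t, y t = zfun (α/ξ) c t :=
      scalar_unique (α/ξ) hβ.le y (zfun (α/ξ) c) hy2
        (fun t => zfun_hasDeriv (α/ξ) c t hc) hz0.symm
    have hypos : ∀ t, 0 < y t := fun t => (hyz t) ▸ zfun_pos (α/ξ) c t hβ hc
    have hylt : ∀ t, y t < 2*(α/ξ) := fun t => (hyz t) ▸ zfun_lt (α/ξ) c t hβ hc
    refine ⟨?_, ?_, ?_, ?_⟩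
    · intro t
      exact ⟨hσeq t, hypos t, by rw [h2β]; exact hylt t⟩
    · apply strictMono_of_deriv_pos
      intro t
      rw [(hy2 t).deriv]
      have h1 := hypos t
      have h2 := hylt t
      nlinarith
    · -- limit at +∞
      have hytop : Tendsto y atTop (nhds (2*(α/ξ))) := by
        have := zfun_tendsto_atTop (α/ξ) c hβ hc
        exact this.congr (fun t => (hyz t).symm)
      have hσtop : Tendsto σf atTop (nhds 0) := by
        have hcont : Continuous (fun x : ℝ => 2*(α/ξ)*x - x^2) := (continuous_const.mul continuous_id).sub (continuous_pow 2)
        have := (hcont.tendsto (2*(α/ξ))).comp hytop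
        have heq : (2*(α/ξ)*(2*(α/ξ)) - (2*(α/ξ))^2) = 0 := by ring
        rw [heq] at this
        exact this.congr (fun t => (hσeq t).symm)
      have : Tendsto (fun t => (σf t, y t)) atTop (nhds (0, 2*(α/ξ))) :=
        hσtop.prodMk_nhds hytop
      rw [h2β]
      exact this
    · -- limit at −∞
      have hybot : Tendsto y atBot (nhds 0) := by
        have := zfun_tendsto_atBot (α/ξ) c hβ hc
        exact this.congr (fun t => (hyz t).symm)
      have hσbot : Tendsto σf atBot (nhds 0) := by
        have hcont : Continuous (fun x : ℝ => 2*(α/ξ)*x - x^2) := (continuous_const.mul continuous_id).sub (continuous_pow 2)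
        have := (hcont.tendsto 0).comp hybot
        have heq : (2*(α/ξ)*0 - 0^2) = 0 := by ring
        rw [heq] at this
        exact this.congr (fun t => (hσeq t).symm)
      exact hσbot.prodMk_nhds hybot
end
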